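/- Global gradient error estimate for PUM approximation: assume the partition of unity {φ⁽ʲ⁾} satisfies the boundary condition ∇_L φ⁽ʲ⁾(e) = 0 for every edge e = (v_i, v_{i'}) with v_i ∈ V_j and v_{i'} ∉ V_j, and assume local bounds ‖x − x_*⁽ʲ⁾‖_{ℒᵖ(G_j)} ≤ E_{j,0} and ‖∇_{L⁽ʲ⁾}(x − x_*⁽ʲ⁾)‖_{ℒᵖ(E_j)} ≤ E_{j,1}. Then the global approximant x_* = ∑_j φ⁽ʲ⁾ x_*⁽ʲ⁾ satisfies ‖∇_L x − ∇_L x_*‖_{ℒᵖ(E)} ≤ ∑_{j=1}^J ( E_{j,1} + ‖∇_L φ⁽ʲ⁾‖_{ℒ^{∞,p}(E)} · E_{j,0} ). -/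

import Mathlib

open Matrix
open scoped ENNReal

/-- `ℒᵖ` norm of a signal restricted to a vertex subset `S` (`max` for `p = ∞`). -/
noncomputable def lpSub {n : ℕ} (p : ℝ≥0∞) (S : Finset (Fin n)) (x : Fin n → ℝ) : ℝ :=
  if p = ∞ then ⨆ v : S, |x v| else (∑ v ∈ S, |x v| ^ p.toReal) ^ (1 / p.toReal)

/-- `ℒᵖ` norm of a function on a (directed) edge set `E`. -/
noncomputable def lpEdge {n : ℕ} (p : ℝ≥0∞) (E : Finset (Fin n × Fin n))
    (z : Fin n × Fin n → ℝ) : ℝ :=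
  if p = ∞ then ⨆ e : E, |z e| else (∑ e ∈ E, |z e| ^ p.toReal) ^ (1 / p.toReal)

/-- Hybrid norm `‖z‖_{ℒ^{∞,p}(E)} = max_i (∑_{i' : (i,i') ∈ E} |z(i,i')|ᵖ)^{1/p}`. -/
noncomputable def lpHybrid {n : ℕ} (p : ℝ≥0∞) (E : Finset (Fin n × Fin n))
    (z : Fin n × Fin n → ℝ) : ℝ :=
  ⨆ i : Fin n, lpEdge p (E.filter fun e => e.1 = i) z

private lemma lpEdge_nonneg {n : ℕ} (p : ℝ≥0∞) (E : Finset (Fin n × Fin n))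
    (z : Fin n × Fin n → ℝ) : 0 ≤ lpEdge p E z := by
  unfold lpEdge; split
  · exact Real.iSup_nonneg fun e => abs_nonneg _
  · exact Real.rpow_nonneg
      (Finset.sum_nonneg fun e _ => Real.rpow_nonneg (abs_nonneg _) _) _

private lemma lpSub_nonneg {n : ℕ} (p : ℝ≥0∞) (S : Finset (Fin n))
    (x : Fin n → ℝ) : 0 ≤ lpSub p S x := by
  unfold lpSub; split
  · exact Real.iSup_nonneg fun v => abs_nonneg _
  · exact Real.rpow_nonneg
      (Finset.sum_nonneg fun v _ => Real.rpow_nonneg (abs_nonneg _) _) _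

private lemma lpHybrid_nonneg {n : ℕ} (p : ℝ≥0∞) (E : Finset (Fin n × Fin n))
    (z : Fin n × Fin n → ℝ) : 0 ≤ lpHybrid p E z :=
  Real.iSup_nonneg fun i => lpEdge_nonneg p _ z

private lemma one_le_toReal {p : ℝ≥0∞} (hp : 1 ≤ p) (htop : p ≠ ∞) : 1 ≤ p.toReal := by
  simpa using ENNReal.toReal_mono htop hp

private lemma lpEdge_le_lpEdge {n : ℕ} {p : ℝ≥0∞} (hp : 1 ≤ p)
    {E E' : Finset (Fin n × Fin n)} {z w : Fin n × Fin n → ℝ}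
    (hsub : E' ⊆ E) (h0 : ∀ e ∈ E, e ∉ E' → z e = 0)
    (hle : ∀ e ∈ E', |z e| ≤ |w e|) :
    lpEdge p E z ≤ lpEdge p E' w := by
  unfold lpEdge
  split
  next h =>
    refine Real.iSup_le ?_ (Real.iSup_nonneg fun e => abs_nonneg _)
    rintro ⟨e, he⟩
    by_cases he' : e ∈ E'
    · exact le_trans (hle e he')
        (le_ciSup (f := fun e : {x // x ∈ E'} => |w e.1|) (Finite.bddAbove_range _) ⟨e, he'⟩)
    · simp only [h0 e he he', abs_zero]
      exact Real.iSup_nonneg fun e => abs_nonneg _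
  next h =>
    have hpt : 0 < p.toReal := lt_of_lt_of_le one_pos (one_le_toReal hp h)
    refine Real.rpow_le_rpow
      (Finset.sum_nonneg fun e _ => Real.rpow_nonneg (abs_nonneg _) _) ?_ (by positivity)
    calc ∑ e ∈ E, |z e| ^ p.toReal
        = ∑ e ∈ E', |z e| ^ p.toReal :=
          (Finset.sum_subset hsub fun e he he' => by
            simp [h0 e he he', Real.zero_rpow hpt.ne']).symm
      _ ≤ ∑ e ∈ E', |w e| ^ p.toReal :=
          Finset.sum_le_sum fun e he =>
            Real.rpow_le_rpow (abs_nonneg _) (hle e he) hpt.le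

private lemma lpEdge_add_le {n : ℕ} {p : ℝ≥0∞} (hp : 1 ≤ p)
    (E : Finset (Fin n × Fin n)) (z w : Fin n × Fin n → ℝ) :
    lpEdge p E (fun e => z e + w e) ≤ lpEdge p E z + lpEdge p E w := by
  unfold lpEdge
  split
  next h =>
    refine Real.iSup_le ?_
      (add_nonneg (Real.iSup_nonneg fun e => abs_nonneg _)
        (Real.iSup_nonneg fun e => abs_nonneg _))
    rintro ⟨e, he⟩
    calc |z e + w e| ≤ |z e| + |w e| := abs_add_le _ _
      _ ≤ _ := add_le_add
          (le_ciSup (f := fun e : {x // x ∈ E} => |z e.1|) (Finite.bddAbove_range _) ⟨e, he⟩)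
          (le_ciSup (f := fun e : {x // x ∈ E} => |w e.1|) (Finite.bddAbove_range _) ⟨e, he⟩)
  next h =>
    exact Real.Lp_add_le E z w (one_le_toReal hp h)

private lemma lpEdge_zero {n : ℕ} {p : ℝ≥0∞} (hp : 1 ≤ p)
    (E : Finset (Fin n × Fin n)) :
    lpEdge p E (fun _ => (0:ℝ)) = 0 := by
  unfold lpEdge
  split
  next =>
    refine le_antisymm (Real.iSup_le (fun e => by simp) le_rfl)
      (Real.iSup_nonneg fun e => abs_nonneg _)
  next h =>
    have hpt : 0 < p.toReal := lt_of_lt_of_le one_pos (one_le_toReal hp h)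
    rw [one_div]
    simp [Real.zero_rpow hpt.ne', Real.zero_rpow (by positivity : (p.toReal)⁻¹ ≠ 0)]

private lemma lpEdge_sum_le {n J : ℕ} {p : ℝ≥0∞} (hp : 1 ≤ p)
    (E : Finset (Fin n × Fin n)) (F : Fin J → Fin n × Fin n → ℝ)
    (s : Finset (Fin J)) :
    lpEdge p E (fun e => ∑ j ∈ s, F j e) ≤ ∑ j ∈ s, lpEdge p E (F j) := by
  classical
  induction s using Finset.induction with
  | empty => simp [lpEdge_zero hp]
  | insert a s' hj ih =>
    rw [Finset.sum_insert hj]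
    calc lpEdge p E (fun e => ∑ j ∈ insert a s', F j e)
        = lpEdge p E (fun e => F a e + ∑ j ∈ s', F j e) := by
          simp [Finset.sum_insert hj]
      _ ≤ lpEdge p E (F a) + lpEdge p E (fun e => ∑ j ∈ s', F j e) :=
          lpEdge_add_le hp E _ _
      _ ≤ _ := add_le_add_right ih _

private lemma le_rpow_of_rpow_le {a b pt : ℝ} (ha : 0 ≤ a) (hpt : 0 < pt)
    (h : a ^ (1/pt) ≤ b) : a ≤ b ^ pt := by
  have := Real.rpow_le_rpow (Real.rpow_nonneg ha _) h hpt.le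
  rwa [← Real.rpow_mul ha, one_div, inv_mul_cancel₀ hpt.ne', Real.rpow_one] at this

private lemma rpow_rpow_inv {b pt : ℝ} (hb : 0 ≤ b) (hpt : 0 < pt) :
    (b ^ pt) ^ (1/pt) = b := by
  rw [← Real.rpow_mul hb, mul_one_div, div_self hpt.ne', Real.rpow_one]
private lemma lpEdge_top {n : ℕ} (E : Finset (Fin n × Fin n)) (z : Fin n × Fin n → ℝ) :
    lpEdge ∞ E z = ⨆ e : E, |z e| := if_pos rfl

private lemma lpEdge_ne_top {n : ℕ} {p : ℝ≥0∞} (h : p ≠ ∞) (E : Finset (Fin n × Fin n))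
    (z : Fin n × Fin n → ℝ) :
    lpEdge p E z = (∑ e ∈ E, |z e| ^ p.toReal) ^ (1 / p.toReal) := if_neg h

private lemma lpSub_top {n : ℕ} (S : Finset (Fin n)) (x : Fin n → ℝ) :
    lpSub ∞ S x = ⨆ v : S, |x v| := if_pos rfl

private lemma lpSub_ne_top {n : ℕ} {p : ℝ≥0∞} (h : p ≠ ∞) (S : Finset (Fin n)) (x : Fin n → ℝ) :
    lpSub p S x = (∑ v ∈ S, |x v| ^ p.toReal) ^ (1 / p.toReal) := if_neg h

set_option maxHeartbeats 2000000 in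
/-- Global gradient error estimate for PUM approximation: if the partition of unity
`{φ j}` subordinate to the cover `{V_j}` satisfies the boundary condition
`∇_L φ j (e) = 0` on all edges leaving `V_j`, and the local approximants satisfy
`‖x - x_*⁽ʲ⁾‖_{ℒᵖ(G_j)} ≤ E0 j` and `‖∇_{L⁽ʲ⁾}(x - x_*⁽ʲ⁾)‖_{ℒᵖ(E_j)} ≤ E1 j`, then the
global approximant `x_* = ∑_j φ j · x_*⁽ʲ⁾` satisfies
`‖∇_L x - ∇_L x_*‖_{ℒᵖ(E)} ≤ ∑_j (E1 j + ‖∇_L φ j‖_{ℒ^{∞,p}(E)} E0 j)`. -/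
theorem pum_global_gradient_error
    {n : ℕ} {J : ℕ} (A : Matrix (Fin n) (Fin n) ℝ)
    (hsymm : A.IsSymm) (hnonneg : ∀ i j, 0 ≤ A i j)
    (p : ℝ≥0∞) (hp : 1 ≤ p)
    (Vj : Fin J → Finset (Fin n)) (hcover : ∀ v, ∃ j, v ∈ Vj j)
    (φ : Fin J → Fin n → ℝ)
    (hφnonneg : ∀ j v, 0 ≤ φ j v)
    (hφsupp : ∀ j v, φ j v ≠ 0 → v ∈ Vj j)
    (hφsum : ∀ v, ∑ j, φ j v = 1)
    (x : Fin n → ℝ) (xloc : Fin J → Fin n → ℝ) (E0 E1 : Fin J → ℝ) :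
    let E : Finset (Fin n × Fin n) := Finset.univ.filter fun e => A e.1 e.2 ≠ 0
    let Ej : Fin J → Finset (Fin n × Fin n) :=
      fun j => E.filter fun e => e.1 ∈ Vj j ∧ e.2 ∈ Vj j
    let grad : (Fin n → ℝ) → Fin n × Fin n → ℝ :=
      fun z e => Real.sqrt (A e.1 e.2) * (z e.1 - z e.2)
    (∀ j, ∀ e ∈ E, e.1 ∈ Vj j → e.2 ∉ Vj j → grad (φ j) e = 0) →
    (∀ j, lpSub p (Vj j) (fun v => x v - xloc j v) ≤ E0 j) →
    (∀ j, lpEdge p (Ej j) (grad fun v => x v - xloc j v) ≤ E1 j) →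
    lpEdge p E (grad fun v => x v - ∑ j, φ j v * xloc j v) ≤
      ∑ j, (E1 j + lpHybrid p E (grad (φ j)) * E0 j) := by
  classical
  intro E Ej grad hbd h0 h1
  have hmemE : ∀ e : Fin n × Fin n, e ∈ E ↔ A e.1 e.2 ≠ 0 := by
    intro e
    constructor
    · intro h; exact (Finset.mem_filter.mp h).2
    · intro h; exact Finset.mem_filter.mpr ⟨Finset.mem_univ e, h⟩
  have hgrad : ∀ (z : Fin n → ℝ) (e : Fin n × Fin n),
      grad z e = Real.sqrt (A e.1 e.2) * (z e.1 - z e.2) := fun z e => rfl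
  set r : Fin J → Fin n → ℝ := fun j v => x v - xloc j v with hrdef
  have hφle1 : ∀ j v, φ j v ≤ 1 := by
    intro j v
    calc φ j v ≤ ∑ j', φ j' v :=
        Finset.single_le_sum (fun j' _ => hφnonneg j' v) (Finset.mem_univ j)
      _ = 1 := hφsum v
  have hφ0 : ∀ j v, v ∉ Vj j → φ j v = 0 := fun j v hv => not_not.mp (mt (hφsupp j v) hv)
  have hEswap : ∀ e : Fin n × Fin n, e ∈ E → ((e.2, e.1) : Fin n × Fin n) ∈ E := by
    intro e he
    rw [hmemE] at he ⊢
    simpa only [hsymm.apply e.1 e.2] using he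
  have hgradswap : ∀ (z : Fin n → ℝ) (e : Fin n × Fin n),
      |grad z (e.2, e.1)| = |grad z e| := by
    intro z e
    rw [hgrad, hgrad]
    simp only
    rw [hsymm.apply e.1 e.2, abs_mul, abs_mul, abs_sub_comm]
  have bnd1 : ∀ j, ∀ e ∈ E, e.2 ∉ Vj j → φ j e.1 = 0 := by
    intro j e he hv2
    by_cases hv1 : e.1 ∈ Vj j
    · have h := hbd j e he hv1 hv2
      rw [hgrad] at h
      have hA : 0 < A e.1 e.2 := lt_of_le_of_ne (hnonneg _ _) (Ne.symm ((hmemE e).mp he))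
      have hs : Real.sqrt (A e.1 e.2) ≠ 0 := (Real.sqrt_pos.mpr hA).ne'
      have h2 : φ j e.2 = 0 := hφ0 j _ hv2
      have := sub_eq_zero.mp ((mul_eq_zero.mp h).resolve_left hs)
      rw [this, h2]
    · exact hφ0 j _ hv1
  have bnd2 : ∀ j, ∀ e ∈ E, e.2 ∉ Vj j → grad (φ j) e = 0 := by
    intro j e he hv2
    rw [hgrad, bnd1 j e he hv2, hφ0 j _ hv2]
    ring
  -- bound for the first term
  have hT1 : ∀ j, lpEdge p E (fun e => φ j e.1 * grad (r j) e) ≤ E1 j := by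
    intro j
    refine le_trans (lpEdge_le_lpEdge hp (E' := Ej j)
      (w := grad (r j)) (Finset.filter_subset _ _) ?_ ?_) ?_
    · intro e he hne
      by_cases hv1 : e.1 ∈ Vj j
      · by_cases hv2 : e.2 ∈ Vj j
        · exact absurd (Finset.mem_filter.mpr ⟨he, hv1, hv2⟩) hne
        · rw [bnd1 j e he hv2, zero_mul]
      · rw [hφ0 j _ hv1, zero_mul]
    · intro e _
      rw [abs_mul]
      calc |φ j e.1| * |grad (r j) e| ≤ 1 * |grad (r j) e| :=
          mul_le_mul_of_nonneg_right
            (abs_le.mpr ⟨by linarith [hφnonneg j e.1], hφle1 j e.1⟩) (abs_nonneg _)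
        _ = |grad (r j) e| := one_mul _
    · exact h1 j
  -- bound for the second term
  have hT2 : ∀ j, lpEdge p E (fun e => grad (φ j) e * r j e.2)
      ≤ lpHybrid p E (grad (φ j)) * E0 j := by
    intro j
    set g := grad (φ j) with hg
    set H := lpHybrid p E g with hH
    have hHnn : 0 ≤ H := lpHybrid_nonneg p E g
    have hE0 : lpSub p (Vj j) (r j) ≤ E0 j := h0 j
    have hE0nn : 0 ≤ E0 j := le_trans (lpSub_nonneg _ _ _) hE0
    have hfiber : ∀ i : Fin n, lpEdge p (E.filter fun e => e.1 = i) g ≤ H := fun i =>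
      le_ciSup (f := fun i => lpEdge p (E.filter fun e => e.1 = i) g)
        (Finite.bddAbove_range _) i
    have hgE : ∀ e ∈ E, e.2 ∉ Vj j → g e = 0 := fun e he hv => bnd2 j e he hv
    rcases eq_or_ne p ∞ with hptop | hptop
    · subst hptop
      rw [lpEdge_top]
      refine Real.iSup_le ?_ (mul_nonneg hHnn hE0nn)
      rintro ⟨e, he⟩
      by_cases hv : e.2 ∈ Vj j
      · have hb1 : |g e| ≤ H := by
          have hsw : ((e.2, e.1) : Fin n × Fin n) ∈ E.filter (fun e' => e'.1 = e.2) :=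
            Finset.mem_filter.mpr ⟨hEswap e he, rfl⟩
          calc |g e| = |g (e.2, e.1)| := (hgradswap (φ j) e).symm
            _ ≤ lpEdge ∞ (E.filter fun e' => e'.1 = e.2) g := by
                rw [lpEdge_top]
                exact le_ciSup (f := fun e' : {y // y ∈ E.filter fun e' => e'.1 = e.2} =>
                  |g e'.1|) (Finite.bddAbove_range _) ⟨_, hsw⟩
            _ ≤ H := hfiber e.2
        have hb2 : |r j e.2| ≤ E0 j := by
          refine le_trans ?_ hE0
          rw [lpSub_top]
          exact le_ciSup (f := fun v : {y // y ∈ Vj j} => |r j v.1|)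
            (Finite.bddAbove_range _) ⟨e.2, hv⟩
        calc |g e * r j e.2| = |g e| * |r j e.2| := abs_mul _ _
          _ ≤ H * E0 j := mul_le_mul hb1 hb2 (abs_nonneg _) hHnn
      · rw [hgE e he hv, zero_mul, abs_zero]
        exact mul_nonneg hHnn hE0nn
    · have hpt1 : 1 ≤ p.toReal := one_le_toReal hp hptop
      have hpt : 0 < p.toReal := lt_of_lt_of_le one_pos hpt1
      rw [lpEdge_ne_top hptop]
      have hsum : ∑ e ∈ E, |g e * r j e.2| ^ p.toReal
          ≤ H ^ p.toReal * ∑ v ∈ Vj j, |r j v| ^ p.toReal := by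
        rw [← Finset.sum_fiberwise_of_maps_to
          (g := fun e : Fin n × Fin n => e.2) (t := Finset.univ)
          (fun e _ => Finset.mem_univ _) (fun e => |g e * r j e.2| ^ p.toReal)]
        have hA : ∀ v ∉ Vj j,
            (∑ e ∈ E.filter (fun e => e.2 = v), |g e * r j e.2| ^ p.toReal) = 0 := by
          intro v hv
          refine Finset.sum_eq_zero fun e he => ?_
          obtain ⟨heE, he2⟩ := Finset.mem_filter.mp he
          rw [hgE e heE (he2 ▸ hv), zero_mul, abs_zero, Real.zero_rpow hpt.ne']
        have hB : ∀ v ∈ Vj j,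
            (∑ e ∈ E.filter (fun e => e.2 = v), |g e * r j e.2| ^ p.toReal)
              ≤ H ^ p.toReal * |r j v| ^ p.toReal := by
          intro v hv
          have hswapsum : ∑ e ∈ E.filter (fun e => e.2 = v), |g e| ^ p.toReal
              = ∑ e ∈ E.filter (fun e => e.1 = v), |g e| ^ p.toReal := by
            refine Finset.sum_nbij' (i := fun e => (e.2, e.1)) (j := fun e => (e.2, e.1))
              ?_ ?_ ?_ ?_ ?_
            · intro e he
              obtain ⟨heE, he2⟩ := Finset.mem_filter.mp he
              exact Finset.mem_filter.mpr ⟨hEswap e heE, he2⟩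
            · intro e he
              obtain ⟨heE, he1⟩ := Finset.mem_filter.mp he
              exact Finset.mem_filter.mpr ⟨hEswap e heE, he1⟩
            · intro e _; rfl
            · intro e _; rfl
            · intro e _; rw [hgradswap (φ j) e]
          have hfsum : ∑ e ∈ E.filter (fun e => e.1 = v), |g e| ^ p.toReal ≤ H ^ p.toReal := by
            refine le_rpow_of_rpow_le
              (Finset.sum_nonneg fun e _ => Real.rpow_nonneg (abs_nonneg _) _) hpt ?_
            rw [← lpEdge_ne_top hptop]
            exact hfiber v
          calc ∑ e ∈ E.filter (fun e => e.2 = v), |g e * r j e.2| ^ p.toReal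
              = (∑ e ∈ E.filter (fun e => e.2 = v), |g e| ^ p.toReal) * |r j v| ^ p.toReal := by
                rw [Finset.sum_mul]
                refine Finset.sum_congr rfl fun e he => ?_
                rw [(Finset.mem_filter.mp he).2, abs_mul,
                  Real.mul_rpow (abs_nonneg _) (abs_nonneg _)]
            _ ≤ H ^ p.toReal * |r j v| ^ p.toReal :=
                mul_le_mul_of_nonneg_right (hswapsum ▸ hfsum)
                  (Real.rpow_nonneg (abs_nonneg _) _)
        calc ∑ v : Fin n, ∑ e ∈ E.filter (fun e => e.2 = v), |g e * r j e.2| ^ p.toReal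
            = ∑ v ∈ Vj j, ∑ e ∈ E.filter (fun e => e.2 = v), |g e * r j e.2| ^ p.toReal :=
              (Finset.sum_subset (Finset.subset_univ _) fun v _ hv => hA v hv).symm
          _ ≤ ∑ v ∈ Vj j, H ^ p.toReal * |r j v| ^ p.toReal := Finset.sum_le_sum hB
          _ = H ^ p.toReal * ∑ v ∈ Vj j, |r j v| ^ p.toReal := (Finset.mul_sum _ _ _).symm
      have hSnn : 0 ≤ ∑ v ∈ Vj j, |r j v| ^ p.toReal :=
        Finset.sum_nonneg fun v _ => Real.rpow_nonneg (abs_nonneg _) _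
      calc (∑ e ∈ E, |g e * r j e.2| ^ p.toReal) ^ (1 / p.toReal)
          ≤ (H ^ p.toReal * ∑ v ∈ Vj j, |r j v| ^ p.toReal) ^ (1 / p.toReal) :=
            Real.rpow_le_rpow
              (Finset.sum_nonneg fun e _ => Real.rpow_nonneg (abs_nonneg _) _)
              hsum (by positivity)
        _ = H * (∑ v ∈ Vj j, |r j v| ^ p.toReal) ^ (1 / p.toReal) := by
            rw [Real.mul_rpow (Real.rpow_nonneg hHnn _) hSnn, rpow_rpow_inv hHnn hpt]
        _ ≤ H * E0 j := by
            refine mul_le_mul_of_nonneg_left ?_ hHnn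
            rw [← lpSub_ne_top hptop]
            exact hE0
  -- decomposition
  have hdecomp : ∀ e, grad (fun v => x v - ∑ j, φ j v * xloc j v) e
      = ∑ j, (φ j e.1 * grad (r j) e + grad (φ j) e * r j e.2) := by
    intro e
    have key : ∀ v, x v - ∑ j, φ j v * xloc j v = ∑ j, φ j v * r j v := by
      intro v
      simp only [hrdef, mul_sub, Finset.sum_sub_distrib, ← Finset.sum_mul, hφsum, one_mul]
    have lhs : grad (fun v => x v - ∑ j, φ j v * xloc j v) e
        = Real.sqrt (A e.1 e.2) * ((x e.1 - ∑ j, φ j e.1 * xloc j e.1)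
            - (x e.2 - ∑ j, φ j e.2 * xloc j e.2)) := rfl
    rw [lhs, key, key, ← Finset.sum_sub_distrib, Finset.mul_sum]
    refine Finset.sum_congr rfl fun j _ => ?_
    rw [hgrad, hgrad]
    ring
  calc lpEdge p E (grad fun v => x v - ∑ j, φ j v * xloc j v)
      = lpEdge p E (fun e => ∑ j, (φ j e.1 * grad (r j) e + grad (φ j) e * r j e.2)) :=
        congrArg _ (funext hdecomp)
    _ ≤ ∑ j, lpEdge p E (fun e => φ j e.1 * grad (r j) e + grad (φ j) e * r j e.2) :=
        lpEdge_sum_le hp E _ Finset.univ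
    _ ≤ ∑ j, (E1 j + lpHybrid p E (grad (φ j)) * E0 j) := by
        refine Finset.sum_le_sum fun j _ => ?_
        calc lpEdge p E (fun e => φ j e.1 * grad (r j) e + grad (φ j) e * r j e.2)
            ≤ lpEdge p E (fun e => φ j e.1 * grad (r j) e)
              + lpEdge p E (fun e => grad (φ j) e * r j e.2) := lpEdge_add_le hp E _ _
          _ ≤ E1 j + lpHybrid p E (grad (φ j)) * E0 j := add_le_add (hT1 j) (hT2 j)
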